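/- Let Ω ⊆ ℝ³ be open, and let ρ : Ω → ℝ with ρ > 0, u = (u₁,u₂,u₃) : Ω → ℝ³ with u₁ > 0, and φ : Ω → ℝ be C² functions satisfying the steady Euler–Poisson continuity equation ∂₁(ρu₁)+∂₂(ρu₂)+∂₃(ρu₃) = 0 and momentum equations ∂₁(ρu_iu₁)+∂₂(ρu_iu₂)+∂₃(ρu_iu₃)+∂_i(p(ρ)) = ρ∂_iφ for i = 1,2,3. Assume the Bernoulli function B = ½(u₁²+u₂²+u₃²) + h(ρ) − φ is constant on Ω and that there is a C¹ function μ : Ω → ℝ with curl u = μ·u on Ω. Then ∂₁(μ/ρ) + (u₂/u₁)∂₂(μ/ρ) + (u₃/u₁)∂₃(μ/ρ) = 0 on Ω, i.e. μ/ρ is conserved along the particle paths. -/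

import Mathlib

open Real Set MeasureTheory

/-- The `i`-th partial derivative of a function on `ℝ³`. -/
noncomputable def pd (i : Fin 3) (f : (Fin 3 → ℝ) → ℝ) (x : Fin 3 → ℝ) : ℝ :=
  fderiv ℝ f x (Pi.single i 1)

/-- The Bernoulli function `B = ½(u₁²+u₂²+u₃²) + h(ρ) − φ`. -/
noncomputable def Bfun (ρ u1 u2 u3 φ : (Fin 3 → ℝ) → ℝ) (h : ℝ → ℝ) :
    (Fin 3 → ℝ) → ℝ :=
  fun x => (1 / 2) * ((u1 x) ^ 2 + (u2 x) ^ 2 + (u3 x) ^ 2) + h (ρ x) - φ x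

/-!
Since `div curl u = 0`, the Beltrami relation `curl u = μ u` forces `div (μ u) = 0`, and the
continuity equation says `div (ρ u) = 0`. By the product rule `u·∇μ = -μ div u` and
`u·∇ρ = -ρ div u`, hence `u·∇(μ/ρ) = (ρ u·∇μ - μ u·∇ρ)/ρ² = 0`; dividing by `u₁ > 0` gives
the claim.
-/

section PartialDerivatives

variable {f g : (Fin 3 → ℝ) → ℝ} {x : Fin 3 → ℝ}

lemma pd_congr_of_eventuallyEq (hfg : f =ᶠ[nhds x] g) (i : Fin 3) : pd i f x = pd i g x := by
  rw [pd, pd, hfg.fderiv_eq]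

lemma pd_mul (hf : DifferentiableAt ℝ f x) (hg : DifferentiableAt ℝ g x) (i : Fin 3) :
    pd i (fun y => f y * g y) x = pd i f x * g x + f x * pd i g x := by
  simp only [pd, fderiv_fun_mul hf hg, add_apply, smul_apply, smul_eq_mul]
  ring

lemma pd_sub (hf : DifferentiableAt ℝ f x) (hg : DifferentiableAt ℝ g x) (i : Fin 3) :
    pd i (fun y => f y - g y) x = pd i f x - pd i g x := by
  simp only [pd, fderiv_fun_sub hf hg, sub_apply]

lemma pd_inv (hg : DifferentiableAt ℝ g x) (hgx : g x ≠ 0) (i : Fin 3) :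
    pd i (fun y => (g y)⁻¹) x = -pd i g x / g x ^ 2 := by
  have hcomp := ((hasFDerivAt_inv hgx).comp x hg.hasFDerivAt).fderiv
  rw [pd, pd, show (fun y => (g y)⁻¹) = (fun t : ℝ => t⁻¹) ∘ g from rfl, hcomp]
  simp only [ContinuousLinearMap.comp_apply, ContinuousLinearMap.toSpanSingleton_apply,
    smul_eq_mul]
  ring

lemma pd_div (hf : DifferentiableAt ℝ f x) (hg : DifferentiableAt ℝ g x) (hgx : g x ≠ 0)
    (i : Fin 3) :
    pd i (fun y => f y / g y) x = (pd i f x * g x - f x * pd i g x) / g x ^ 2 := by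
  simp only [div_eq_mul_inv]
  rw [pd_mul hf (hg.fun_inv hgx), pd_inv hg hgx]
  field_simp
  ring

lemma differentiableAt_pd (hf : ContDiffAt ℝ 2 f x) (i : Fin 3) :
    DifferentiableAt ℝ (pd i f) x :=
  ((hf.fderiv_right (m := 1) one_add_one_eq_two.le).differentiableAt one_ne_zero).clm_apply
    (differentiableAt_const _)

lemma pd_pd_comm (hf : ContDiffAt ℝ 2 f x) (i j : Fin 3) :
    pd i (pd j f) x = pd j (pd i f) x := by
  have hd : DifferentiableAt ℝ (fderiv ℝ f) x :=
    (hf.fderiv_right (m := 1) one_add_one_eq_two.le).differentiableAt one_ne_zero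
  have hpd : ∀ k l : Fin 3,
      pd k (pd l f) x = fderiv ℝ (fderiv ℝ f) x (Pi.single k 1) (Pi.single l 1) := by
    intro k l
    rw [pd, show pd l f = fun y => fderiv ℝ f y (Pi.single l 1) from rfl,
      fderiv_clm_apply hd (differentiableAt_const _)]
    simp only [fderiv_fun_const, Pi.zero_apply, ContinuousLinearMap.comp_zero, zero_add,
      ContinuousLinearMap.flip_apply]
  rw [hpd, hpd]
  exact (hf.isSymmSndFDerivAt (by simp)).eq _ _

end PartialDerivatives

section VectorCalculus

noncomputable def divergence (v1 v2 v3 : (Fin 3 → ℝ) → ℝ) (x : Fin 3 → ℝ) : ℝ :=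
  pd 0 v1 x + pd 1 v2 x + pd 2 v3 x

noncomputable def derivAlong (u1 u2 u3 f : (Fin 3 → ℝ) → ℝ) (x : Fin 3 → ℝ) : ℝ :=
  u1 x * pd 0 f x + u2 x * pd 1 f x + u3 x * pd 2 f x

variable {u1 u2 u3 f g : (Fin 3 → ℝ) → ℝ} {x : Fin 3 → ℝ}

lemma divergence_mul (hg : DifferentiableAt ℝ g x) (hu1 : DifferentiableAt ℝ u1 x)
    (hu2 : DifferentiableAt ℝ u2 x) (hu3 : DifferentiableAt ℝ u3 x) :
    divergence (fun y => g y * u1 y) (fun y => g y * u2 y) (fun y => g y * u3 y) x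
      = derivAlong u1 u2 u3 g x + g x * divergence u1 u2 u3 x := by
  rw [divergence, pd_mul hg hu1, pd_mul hg hu2, pd_mul hg hu3, derivAlong, divergence]
  ring

lemma divergence_curl (hu1 : ContDiffAt ℝ 2 u1 x) (hu2 : ContDiffAt ℝ 2 u2 x)
    (hu3 : ContDiffAt ℝ 2 u3 x) :
    divergence (fun y => pd 1 u3 y - pd 2 u2 y) (fun y => pd 2 u1 y - pd 0 u3 y)
      (fun y => pd 0 u2 y - pd 1 u1 y) x = 0 := by
  rw [divergence, pd_sub (differentiableAt_pd hu3 1) (differentiableAt_pd hu2 2),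
    pd_sub (differentiableAt_pd hu1 2) (differentiableAt_pd hu3 0),
    pd_sub (differentiableAt_pd hu2 0) (differentiableAt_pd hu1 1),
    pd_pd_comm hu3 0 1, pd_pd_comm hu2 0 2, pd_pd_comm hu1 1 2]
  ring

lemma divergence_mul_eq_zero_of_curl_eq_mul (hu1 : ContDiffAt ℝ 2 u1 x)
    (hu2 : ContDiffAt ℝ 2 u2 x) (hu3 : ContDiffAt ℝ 2 u3 x)
    (hcurl : ∀ᶠ y in nhds x,
      pd 1 u3 y - pd 2 u2 y = g y * u1 y
        ∧ pd 2 u1 y - pd 0 u3 y = g y * u2 y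
        ∧ pd 0 u2 y - pd 1 u1 y = g y * u3 y) :
    divergence (fun y => g y * u1 y) (fun y => g y * u2 y) (fun y => g y * u3 y) x = 0 := by
  have h1 := pd_congr_of_eventuallyEq (hcurl.mono fun _ h => h.1) 0
  have h2 := pd_congr_of_eventuallyEq (hcurl.mono fun _ h => h.2.1) 1
  have h3 := pd_congr_of_eventuallyEq (hcurl.mono fun _ h => h.2.2) 2
  rw [divergence, ← h1, ← h2, ← h3]
  exact divergence_curl hu1 hu2 hu3

lemma derivAlong_div (hf : DifferentiableAt ℝ f x) (hg : DifferentiableAt ℝ g x)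
    (hgx : g x ≠ 0) :
    derivAlong u1 u2 u3 (fun y => f y / g y) x
      = (g x * derivAlong u1 u2 u3 f x - f x * derivAlong u1 u2 u3 g x) / g x ^ 2 := by
  rw [derivAlong, pd_div hf hg hgx, pd_div hf hg hgx, pd_div hf hg hgx, derivAlong, derivAlong]
  ring

lemma derivAlong_div_eq_zero_of_divergence_mul_eq_zero (hf : DifferentiableAt ℝ f x)
    (hg : DifferentiableAt ℝ g x) (hgx : g x ≠ 0) (hu1 : DifferentiableAt ℝ u1 x)
    (hu2 : DifferentiableAt ℝ u2 x) (hu3 : DifferentiableAt ℝ u3 x)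
    (hfu : divergence (fun y => f y * u1 y) (fun y => f y * u2 y) (fun y => f y * u3 y) x = 0)
    (hgu : divergence (fun y => g y * u1 y) (fun y => g y * u2 y) (fun y => g y * u3 y) x = 0) :
    derivAlong u1 u2 u3 (fun y => f y / g y) x = 0 := by
  rw [divergence_mul hf hu1 hu2 hu3] at hfu
  rw [divergence_mul hg hu1 hu2 hu3] at hgu
  rw [derivAlong_div hf hg hgx]
  linear_combination (g x * hfu - f x * hgu) / g x ^ 2

end VectorCalculus

theorem mu_over_rho_conserved_general
    (Ω : Set (Fin 3 → ℝ)) (hΩ : IsOpen Ω)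
    (ρ u1 u2 u3 : (Fin 3 → ℝ) → ℝ)
    (hρpos : ∀ x ∈ Ω, 0 < ρ x)
    (hu1pos : ∀ x ∈ Ω, 0 < u1 x)
    (hρ : ContDiffOn ℝ 2 ρ Ω) (hu1 : ContDiffOn ℝ 2 u1 Ω)
    (hu2 : ContDiffOn ℝ 2 u2 Ω) (hu3 : ContDiffOn ℝ 2 u3 Ω)
    (hcont : ∀ x ∈ Ω,
      pd 0 (fun y => ρ y * u1 y) x + pd 1 (fun y => ρ y * u2 y) x
        + pd 2 (fun y => ρ y * u3 y) x = 0)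
    (μ : (Fin 3 → ℝ) → ℝ) (hμ : ContDiffOn ℝ 1 μ Ω)
    (hcurl : ∀ x ∈ Ω,
      pd 1 u3 x - pd 2 u2 x = μ x * u1 x
        ∧ pd 2 u1 x - pd 0 u3 x = μ x * u2 x
        ∧ pd 0 u2 x - pd 1 u1 x = μ x * u3 x) :
    ∀ x ∈ Ω,
      pd 0 (fun y => μ y / ρ y) x + (u2 x / u1 x) * pd 1 (fun y => μ y / ρ y) x
        + (u3 x / u1 x) * pd 2 (fun y => μ y / ρ y) x = 0 := by
  intro x hx
  have hΩx := hΩ.mem_nhds hx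
  have cu1 := hu1.contDiffAt hΩx
  have cu2 := hu2.contDiffAt hΩx
  have cu3 := hu3.contDiffAt hΩx
  have hμu : divergence (fun y => μ y * u1 y) (fun y => μ y * u2 y) (fun y => μ y * u3 y) x
      = 0 :=
    divergence_mul_eq_zero_of_curl_eq_mul cu1 cu2 cu3 (Filter.eventually_of_mem hΩx hcurl)
  have hadv : derivAlong u1 u2 u3 (fun y => μ y / ρ y) x = 0 :=
    derivAlong_div_eq_zero_of_divergence_mul_eq_zero
      ((hμ.contDiffAt hΩx).differentiableAt one_ne_zero)
      ((hρ.contDiffAt hΩx).differentiableAt two_ne_zero) (hρpos x hx).ne'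
      (cu1.differentiableAt two_ne_zero) (cu2.differentiableAt two_ne_zero)
      (cu3.differentiableAt two_ne_zero) hμu (hcont x hx)
  have hu1x : u1 x ≠ 0 := (hu1pos x hx).ne'
  calc _ = derivAlong u1 u2 u3 (fun y => μ y / ρ y) x / u1 x := by
        rw [derivAlong]
        field_simp
    _ = 0 := by rw [hadv, zero_div]

/-- For a Beltrami solution (`curl u = μ u`) of the steady Euler–Poisson system with
constant Bernoulli function, `μ/ρ` is conserved along particle paths. -/
theorem mu_over_rho_conserved
    (Ω : Set (Fin 3 → ℝ)) (hΩ : IsOpen Ω)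
    (ρ u1 u2 u3 φ : (Fin 3 → ℝ) → ℝ)
    (p p' h : ℝ → ℝ)
    (hρpos : ∀ x ∈ Ω, 0 < ρ x)
    (hu1pos : ∀ x ∈ Ω, 0 < u1 x)
    (hρ : ContDiffOn ℝ 2 ρ Ω) (hu1 : ContDiffOn ℝ 2 u1 Ω)
    (hu2 : ContDiffOn ℝ 2 u2 Ω) (hu3 : ContDiffOn ℝ 2 u3 Ω)
    (hφ : ContDiffOn ℝ 2 φ Ω)
    (hpC : ContDiffOn ℝ 2 p (Set.Ioi 0))
    (hp : ∀ r : ℝ, 0 < r → HasDerivAt p (p' r) r)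
    (hh : ∀ r : ℝ, 0 < r → HasDerivAt h (p' r / r) r)
    (hcont : ∀ x ∈ Ω,
      pd 0 (fun y => ρ y * u1 y) x + pd 1 (fun y => ρ y * u2 y) x
        + pd 2 (fun y => ρ y * u3 y) x = 0)
    (hmom1 : ∀ x ∈ Ω,
      pd 0 (fun y => ρ y * u1 y * u1 y) x + pd 1 (fun y => ρ y * u1 y * u2 y) x
        + pd 2 (fun y => ρ y * u1 y * u3 y) x + pd 0 (fun y => p (ρ y)) x
        = ρ x * pd 0 φ x)
    (hmom2 : ∀ x ∈ Ω,
      pd 0 (fun y => ρ y * u2 y * u1 y) x + pd 1 (fun y => ρ y * u2 y * u2 y) x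
        + pd 2 (fun y => ρ y * u2 y * u3 y) x + pd 1 (fun y => p (ρ y)) x
        = ρ x * pd 1 φ x)
    (hmom3 : ∀ x ∈ Ω,
      pd 0 (fun y => ρ y * u3 y * u1 y) x + pd 1 (fun y => ρ y * u3 y * u2 y) x
        + pd 2 (fun y => ρ y * u3 y * u3 y) x + pd 2 (fun y => p (ρ y)) x
        = ρ x * pd 2 φ x)
    (hBconst : ∀ x ∈ Ω, ∀ y ∈ Ω, Bfun ρ u1 u2 u3 φ h x = Bfun ρ u1 u2 u3 φ h y)
    (μ : (Fin 3 → ℝ) → ℝ) (hμ : ContDiffOn ℝ 1 μ Ω)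
    (hcurl : ∀ x ∈ Ω,
      pd 1 u3 x - pd 2 u2 x = μ x * u1 x
        ∧ pd 2 u1 x - pd 0 u3 x = μ x * u2 x
        ∧ pd 0 u2 x - pd 1 u1 x = μ x * u3 x) :
    ∀ x ∈ Ω,
      pd 0 (fun y => μ y / ρ y) x + (u2 x / u1 x) * pd 1 (fun y => μ y / ρ y) x
        + (u3 x / u1 x) * pd 2 (fun y => μ y / ρ y) x = 0 :=
  mu_over_rho_conserved_general Ω hΩ ρ u1 u2 u3 hρpos hu1pos hρ hu1 hu2 hu3 hcont μ hμ hcurl
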